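/- arXiv:2407.01465 — 2 statements merged into one kernel-verified Lean document; each statement's English description precedes it below -/
import Mathlib

section
/- Let r ≥ 2, let G be a finite simple graph, let M ⊆ V(G) be a K_r-cover of G, and let 𝒟 be a family of cliques of G, each of size at most r − 1 and each contained in M. Assume the triple (G, 𝒟, M) is r-stripped. Then for every integer k the following are equivalent: (i) there exists S ⊆ V(G) with |S| ≤ k that intersects every r-clique of G and every D ∈ 𝒟; (ii) there exists S ⊆ M with |S| ≤ k that intersects every r-clique of G contained in M and every D ∈ 𝒟. -/
/-!
If `S` hits every `r`-clique inside `M` and every member of `𝒟`, it already hits every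
`r`-clique `K` of `G`: when `K ⊄ M`, the part `K ∩ M` is nonempty (as `M` is a `K_r`-cover),
has fewer than `r` vertices, and has the petal `K \ M` outside `M`; since no clique is lush,
some `d ∈ 𝒟` lies in `K ∩ M`, and `S` meets `d`. Conversely, restricting a solution to `M`
keeps it a solution, because every member of `𝒟` lies in `M`.
-/

open Finset

variable {V : Type*} [Fintype V] [DecidableEq V]

/-- `M` is a `K_r`-cover of `G`: it intersects every `r`-vertex clique of `G`
(equivalently, `G - M` has no clique on `r` vertices). -/
def KrCover (G : SimpleGraph V) (r : ℕ) (M : Finset V) : Prop :=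
  ∀ K : Finset V, G.IsNClique r K → (K ∩ M).Nonempty

section Stripped

variable {α : Type*} [DecidableEq α]

/-- `(G, D, M)` is `r`-stripped: no clique `X ⊆ M` is lush. -/
def IsStripped (G : SimpleGraph α) (r : ℕ) (M : Finset α) (D : Finset (Finset α)) : Prop :=
  ∀ X : Finset α, G.IsClique (X : Set α) → X ⊆ M → 1 ≤ X.card → X.card ≤ r - 1 →
    (∃ Y : Finset α, Disjoint X Y ∧ Disjoint Y M ∧ G.IsNClique r (X ∪ Y)) → ∃ d ∈ D, d ⊆ X

variable {G : SimpleGraph α} {r : ℕ} {M K S : Finset α} {D : Finset (Finset α)}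

theorem exists_mem_subset_inter_of_not_subset (hM : KrCover G r M)
    (hstripped : IsStripped G r M D) (hK : G.IsNClique r K) (hKM : ¬ K ⊆ M) :
    ∃ d ∈ D, d ⊆ K ∩ M := by
  have hlt : (K ∩ M).card < r := hK.card_eq ▸ card_lt_card
    (inter_subset_left.ssubset_of_not_subset fun h => hKM (h.trans inter_subset_right))
  refine hstripped (K ∩ M) (hK.isClique.subset (coe_subset.2 inter_subset_left))
    inter_subset_right (card_pos.2 (hM K hK)) (by omega)
    ⟨K \ M, (disjoint_sdiff_inter K M).symm, sdiff_disjoint, ?_⟩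
  rwa [union_comm, sdiff_union_inter]

theorem inter_nonempty_of_isStripped (hM : KrCover G r M) (hstripped : IsStripped G r M D)
    (hSK : ∀ K : Finset α, G.IsNClique r K → K ⊆ M → (K ∩ S).Nonempty)
    (hSD : ∀ d ∈ D, (d ∩ S).Nonempty) (hK : G.IsNClique r K) : (K ∩ S).Nonempty := by
  by_cases hKM : K ⊆ M
  · exact hSK K hK hKM
  obtain ⟨d, hdD, hdK⟩ := exists_mem_subset_inter_of_not_subset hM hstripped hK hKM
  exact (hSD d hdD).mono (inter_subset_inter_right (hdK.trans inter_subset_left))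

theorem inter_inter_nonempty_of_subset {s t u : Finset α} (hsu : s ⊆ u) (hst : (s ∩ t).Nonempty) :
    (s ∩ (t ∩ u)).Nonempty := by
  rwa [← inter_assoc, inter_right_comm, inter_eq_left.2 hsu]

end Stripped

theorem stripped_equivalent_instances_general (G : SimpleGraph V) (r : ℕ)
    (M : Finset V) (hM : KrCover G r M)
    (D : Finset (Finset V))
    (hD : ∀ d ∈ D, G.IsClique (d : Set V) ∧ d.card ≤ r - 1 ∧ d ⊆ M)
    (hstripped : ∀ X : Finset V, G.IsClique (X : Set V) → X ⊆ M →
      1 ≤ X.card → X.card ≤ r - 1 →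
      (∃ Y : Finset V, Disjoint X Y ∧ Disjoint Y M ∧ G.IsNClique r (X ∪ Y)) →
      ∃ d ∈ D, d ⊆ X)
    (k : ℕ) :
    (∃ S : Finset V, S.card ≤ k ∧
        (∀ K : Finset V, G.IsNClique r K → (K ∩ S).Nonempty) ∧
        (∀ d ∈ D, (d ∩ S).Nonempty)) ↔
      (∃ S : Finset V, S ⊆ M ∧ S.card ≤ k ∧
        (∀ K : Finset V, G.IsNClique r K → K ⊆ M → (K ∩ S).Nonempty) ∧
        (∀ d ∈ D, (d ∩ S).Nonempty)) := by
  constructor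
  · rintro ⟨S, hSk, hSK, hSD⟩
    exact ⟨S ∩ M, inter_subset_right, (card_le_card inter_subset_left).trans hSk,
      fun K hK hKM => inter_inter_nonempty_of_subset hKM (hSK K hK),
      fun d hd => inter_inter_nonempty_of_subset (hD d hd).2.2 (hSD d hd)⟩
  · rintro ⟨S, -, hSk, hSK, hSD⟩
    exact ⟨S, hSk, fun K hK => inter_nonempty_of_isStripped hM hstripped hSK hSD hK, hSD⟩

/-- In an `r`-stripped context, the annotated instance on `G` is equivalent to
the annotated instance on the induced subgraph `G[M]`. -/
theorem stripped_equivalent_instances (G : SimpleGraph V) (r : ℕ) (hr : 2 ≤ r)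
    (M : Finset V) (hM : KrCover G r M)
    (D : Finset (Finset V))
    (hD : ∀ d ∈ D, G.IsClique (d : Set V) ∧ d.card ≤ r - 1 ∧ d ⊆ M)
    (hstripped : ∀ X : Finset V, G.IsClique (X : Set V) → X ⊆ M →
      1 ≤ X.card → X.card ≤ r - 1 →
      (∃ Y : Finset V, Disjoint X Y ∧ Disjoint Y M ∧ G.IsNClique r (X ∪ Y)) →
      ∃ d ∈ D, d ⊆ X)
    (k : ℕ) :
    (∃ S : Finset V, S.card ≤ k ∧
        (∀ K : Finset V, G.IsNClique r K → (K ∩ S).Nonempty) ∧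
        (∀ d ∈ D, (d ∩ S).Nonempty)) ↔
      (∃ S : Finset V, S ⊆ M ∧ S.card ≤ k ∧
        (∀ K : Finset V, G.IsNClique r K → K ⊆ M → (K ∩ S).Nonempty) ∧
        (∀ d ∈ D, (d ∩ S).Nonempty)) :=
  stripped_equivalent_instances_general G r M hM D hD hstripped k
end

section
/- Let k ∈ ℕ, let λ ≥ 1 be an integer, let S ≥ 0 be a real number, and let T : ℕ × ℕ → ℝ be a nonnegative function such that: (i) T(0, y) ≤ S for every y; (ii) T(x, y) ≤ S for every x and every y > k; (iii) T(x, y) ≤ T(x − 1, y) + T(x, y + λ) + S for every x ≥ 1 and every y ≤ k; and (iv) T is nondecreasing in its first argument, i.e., T(x, y) ≤ T(x′, y) whenever x ≤ x′. Then for all x, y ∈ ℕ, T(x, y) ≤ x·T(x, y + λ) + (x + 1)·S. -/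
/-!
Induction on `x`. Above the threshold `k` the bound is immediate from (ii), since `T ≥ 0` forces
`S ≥ 0`. Otherwise one application of (iii) followed by the induction hypothesis gives
`T(x, y) ≤ (x - 1)·T(x - 1, y + λ) + T(x, y + λ) + (x + 1)·S`, and monotonicity (iv) replaces
`T(x - 1, y + λ)` by `T(x, y + λ)`.
-/

theorem petal_recurrence_step_general (k lam : ℕ) (S : ℝ)
    (T : ℕ → ℕ → ℝ) (hT0 : ∀ x y, 0 ≤ T x y)
    (h1 : ∀ y, T 0 y ≤ S)
    (h2 : ∀ x y, k < y → T x y ≤ S)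
    (h3 : ∀ x y, 1 ≤ x → y ≤ k → T x y ≤ T (x - 1) y + T x (y + lam) + S)
    (h4 : ∀ x x' y, x ≤ x' → T x y ≤ T x' y) :
    ∀ x y : ℕ, T x y ≤ (x : ℝ) * T x (y + lam) + ((x : ℝ) + 1) * S := by
  have hS : 0 ≤ S := (hT0 0 0).trans (h1 0)
  intro x
  induction x with
  | zero => simpa using h1
  | succ n ih =>
    intro y
    push_cast
    have hn : (0 : ℝ) ≤ n := n.cast_nonneg
    rcases lt_or_ge k y with hky | hyk
    · nlinarith [h2 (n + 1) y hky, hT0 (n + 1) (y + lam)]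
    · have hmono : T n (y + lam) ≤ T (n + 1) (y + lam) := h4 n (n + 1) _ n.le_succ
      calc T (n + 1) y
          ≤ T n y + T (n + 1) (y + lam) + S := by simpa using h3 (n + 1) y n.succ_pos hyk
        _ ≤ n * T n (y + lam) + (n + 1) * S + T (n + 1) (y + lam) + S := by linarith [ih y]
        _ ≤ (n + 1) * T (n + 1) (y + lam) + (n + 1 + 1) * S := by nlinarith

theorem petal_recurrence_step (k lam : ℕ) (hlam : 1 ≤ lam) (S : ℝ) (hS : 0 ≤ S)
    (T : ℕ → ℕ → ℝ) (hT0 : ∀ x y, 0 ≤ T x y)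
    (h1 : ∀ y, T 0 y ≤ S)
    (h2 : ∀ x y, k < y → T x y ≤ S)
    (h3 : ∀ x y, 1 ≤ x → y ≤ k → T x y ≤ T (x - 1) y + T x (y + lam) + S)
    (h4 : ∀ x x' y, x ≤ x' → T x y ≤ T x' y) :
    ∀ x y : ℕ, T x y ≤ (x : ℝ) * T x (y + lam) + ((x : ℝ) + 1) * S :=
  petal_recurrence_step_general k lam S T hT0 h1 h2 h3 h4
end
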